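/- arXiv:2105.07922 — 3 statements merged into one kernel-verified Lean document; each statement's English description precedes it below -/
import Mathlib

section
/- Let p > 0 and suppose z_1,...,z_n ∈ ℂ satisfy: for all y ≥ 0, #{i : |z_i| ≤ y} ≤ C·y² for a constant C > 0. Then ∑_{i=1}^n |z_i|^p ≥ (2/(p+2)) · n · (n/C)^{p/2}. -/
/-!
Sort the moduli increasingly. The `k`-th smallest one `r` (counting from `k = 0`) bounds at
least `k + 1` of the moduli from above, so the counting hypothesis gives `k + 1 ≤ C r²`, i.e. `r ^ p ≥ ((k + 1) / C) ^ (p / 2)`.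
Summing over `k` and comparing `∑_{k < n} (k + 1) ^ q` with `∫₀ⁿ x ^ q dx = n ^ (q + 1) / (q + 1)`
gives the bound.
-/

open Finset

lemma rpow_succ_div_le_sum_range_rpow {q : ℝ} (hq : 0 ≤ q) (n : ℕ) :
    (n : ℝ) ^ (q + 1) / (q + 1) ≤ ∑ k ∈ range n, ((k : ℝ) + 1) ^ q := by
  have hmono : MonotoneOn (fun x : ℝ => x ^ q) (Set.Icc 0 (0 + n)) :=
    fun x hx _ _ hxy => Real.rpow_le_rpow hx.1 hxy hq
  have h := hmono.integral_le_sum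
  rw [integral_rpow (Or.inl (by linarith))] at h
  simpa [Real.zero_rpow (by linarith : q + 1 ≠ 0), add_comm] using h

lemma Tuple.succ_le_card_filter_le_sort {α : Type*} [LinearOrder α] {n : ℕ} (r : Fin n → α)
    (k : Fin n) : (k : ℕ) + 1 ≤ #{i | r i ≤ r (Tuple.sort r k)} := by
  calc (k : ℕ) + 1 = #((Iic k).map (Tuple.sort r).toEmbedding) := by simp
    _ ≤ _ := card_le_card fun i hi => by
        obtain ⟨j, hj, rfl⟩ := mem_map.1 hi
        simpa using Tuple.monotone_sort r (mem_Iic.1 hj)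

lemma sum_div_rpow_le_sum_rpow_of_card_filter_le {n : ℕ} {p C : ℝ} (hp : 0 ≤ p) (hC : 0 < C)
    (r : Fin n → ℝ) (hr : ∀ i, 0 ≤ r i)
    (hcount : ∀ y : ℝ, 0 ≤ y → (#{i | r i ≤ y} : ℝ) ≤ C * y ^ 2) :
    ∑ k ∈ range n, (((k : ℝ) + 1) / C) ^ (p / 2) ≤ ∑ i, r i ^ p := by
  rw [← Fin.sum_univ_eq_sum_range (fun k => (((k : ℝ) + 1) / C) ^ (p / 2)),
    ← Equiv.sum_comp (Tuple.sort r) (fun i => r i ^ p)]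
  gcongr with k
  set x := r (Tuple.sort r k)
  have hx : ((k : ℝ) + 1) / C ≤ x ^ 2 := by
    rw [div_le_iff₀' hC]
    exact le_trans (mod_cast Tuple.succ_le_card_filter_le_sort r k) (hcount x (hr _))
  calc (((k : ℝ) + 1) / C) ^ (p / 2) ≤ (x ^ 2) ^ (p / 2) := by gcongr
    _ = x ^ p := by rw [← Real.rpow_two, ← Real.rpow_mul (hr _)]; congr 1; ring

theorem stmt_5 (n : ℕ) (p C : ℝ) (hp : 0 < p) (hC : 0 < C) (z : Fin n → ℂ)
    (hcount : ∀ y : ℝ, 0 ≤ y →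
      ((Finset.univ.filter fun i => ‖z i‖ ≤ y).card : ℝ) ≤ C * y ^ 2) :
    ∑ i, ‖z i‖ ^ p ≥ (2 / (p + 2)) * n * ((n : ℝ) / C) ^ (p / 2) := by
  have hq : 0 ≤ p / 2 := by positivity
  calc (2 / (p + 2)) * n * ((n : ℝ) / C) ^ (p / 2)
      = (n : ℝ) ^ (p / 2 + 1) / (p / 2 + 1) / C ^ (p / 2) := by
        rw [Real.div_rpow n.cast_nonneg hC.le, Real.rpow_add' n.cast_nonneg (by positivity),
          Real.rpow_one]
        field_simp
    _ ≤ (∑ k ∈ range n, ((k : ℝ) + 1) ^ (p / 2)) / C ^ (p / 2) := by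
        gcongr
        exact rpow_succ_div_le_sum_range_rpow hq n
    _ = ∑ k ∈ range n, (((k : ℝ) + 1) / C) ^ (p / 2) := by
        rw [sum_div]
        exact sum_congr rfl fun k _ => (Real.div_rpow (by positivity) hC.le _).symm
    _ ≤ ∑ i, ‖z i‖ ^ p :=
        sum_div_rpow_le_sum_rpow_of_card_filter_le hp.le hC _ (fun _ => norm_nonneg _) hcount
end

section
/- For any finite set of complex numbers z_1,...,z_n (n ≥ 2) that is 1-separated, and for any p > 0, if every disk of radius y about the origin contains at most (2π/√3)·y² + ε·y² of the points (for all y larger than some y_0 and a fixed ε > 0), then (∑_{i=1}^n |z_i|^p)^{1/p} ≥ (2/(p+2))^{1/p} · (√3/(2π + √3 ε))^{1/2} · n^{1/2 + 1/p} + o(n^{1/2+1/p}) as n → ∞. -/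
/-!
Let `r₁ ≤ ⋯ ≤ rₙ` be the moduli `|zᵢ|` in increasing order and `C = 2π/√3 + ε`. The disk of
radius `r_k` contains at least `k` points, so the counting hypothesis gives `k ≤ C r_k²` as soon
as `r_k ≥ y₀`, and `r_k < y₀` is only possible for the at most `C y₀²` indices `k ≤ C y₀²`.
Hence `∑ r_k^p ≥ C^{-p/2} ∑_{C y₀² < k ≤ n} k^{p/2} ≥ C^{-p/2} (n^{p/2+1}/(p/2+1) - O(n^{p/2}))`
by comparing with `∫₀ⁿ x^{p/2} dx`, and the `p`-th root of this lower bound is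
`(2/(p+2))^{1/p} C^{-1/2} n^{1/2+1/p} + o(n^{1/2+1/p})`.
-/

open Filter Finset Asymptotics Topology

theorem Tuple.le_card_filter_le_sort {α : Type*} [LinearOrder α] {n : ℕ} (f : Fin n → α)
    (k : Fin n) : k.val + 1 ≤ #{i | f i ≤ f (Tuple.sort f k)} := by
  calc k.val + 1 = #(Iic k) := (Fin.card_Iic k).symm
    _ ≤ _ := card_le_card_of_injOn (Tuple.sort f)
        (fun j hj => by simpa using Tuple.monotone_sort f (mem_Iic.mp hj))
        (Tuple.sort f).injective.injOn

theorem rpow_add_one_div_le_sum_range_rpow {q : ℝ} (hq : 0 ≤ q) (n : ℕ) :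
    (n : ℝ) ^ (q + 1) / (q + 1) ≤ ∑ k ∈ range n, ((k + 1 : ℕ) : ℝ) ^ q := by
  have hmono : MonotoneOn (fun x : ℝ => x ^ q) (Set.Icc 0 (0 + n)) :=
    fun a ha b _ hab => Real.rpow_le_rpow ha.1 hab hq
  have h := hmono.integral_le_sum
  rw [integral_rpow (Or.inl (by linarith)), Real.zero_rpow (by positivity), zero_add,
    sub_zero] at h
  simpa using h

theorem sub_le_sum_range_filter_rpow {q : ℝ} (hq : 0 ≤ q) (K : ℝ) (n : ℕ) :
    (n : ℝ) ^ (q + 1) / (q + 1) - ⌈K⌉₊ * (n : ℝ) ^ q ≤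
      ∑ k ∈ range n with K < (k + 1 : ℕ), ((k + 1 : ℕ) : ℝ) ^ q := by
  have hcard : #{k ∈ range n | ¬ K < (k + 1 : ℕ)} ≤ ⌈K⌉₊ := by
    refine (card_le_card fun k hk => ?_).trans (card_range _).le
    simp only [mem_filter, mem_range, not_lt] at hk ⊢
    exact Nat.lt_ceil.2 (by push_cast at hk; linarith [hk.2])
  have hsmall : ∑ k ∈ range n with ¬ K < (k + 1 : ℕ), ((k + 1 : ℕ) : ℝ) ^ q ≤
      ⌈K⌉₊ * (n : ℝ) ^ q := by
    calc _ ≤ #{k ∈ range n | ¬ K < (k + 1 : ℕ)} • (n : ℝ) ^ q := by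
          refine sum_le_card_nsmul _ _ _ fun k hk => Real.rpow_le_rpow (by positivity) ?_ hq
          exact_mod_cast mem_range.mp (mem_filter.mp hk).1
      _ ≤ _ := by rw [nsmul_eq_mul]; gcongr
  have hsplit := sum_filter_add_sum_filter_not (range n) (fun k : ℕ => K < (k + 1 : ℕ))
    (fun k => ((k + 1 : ℕ) : ℝ) ^ q)
  linarith [rpow_add_one_div_le_sum_range_rpow hq n]

section CountingBound

variable {n d : ℕ} {f : Fin n → ℝ} {C y₀ : ℝ}

theorem le_mul_sort_pow_of_card_filter_le
    (hcount : ∀ y, y₀ ≤ y → (#{i | f i ≤ y} : ℝ) ≤ C * y ^ d) (k : Fin n)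
    (hk : C * y₀ ^ d < k.val + 1) : (k.val + 1 : ℝ) ≤ C * f (Tuple.sort f k) ^ d := by
  have hN : (k.val + 1 : ℝ) ≤ #{i | f i ≤ f (Tuple.sort f k)} := by
    exact_mod_cast Tuple.le_card_filter_le_sort f k
  have hy₀ : y₀ ≤ f (Tuple.sort f k) := by
    by_contra! hlt
    have hmono : (#{i | f i ≤ f (Tuple.sort f k)} : ℝ) ≤ #{i | f i ≤ y₀} := by
      exact_mod_cast card_le_card
        (monotone_filter_right _ fun i _ (hi : f i ≤ _) => hi.trans hlt.le)
    linarith [hcount y₀ le_rfl]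
  exact hN.trans (hcount _ hy₀)

theorem sum_range_filter_div_rpow_le_sum_rpow {p : ℝ} (hp : 0 ≤ p) (hd : d ≠ 0) (hC : 0 < C)
    (hf : ∀ i, 0 ≤ f i) (hcount : ∀ y, y₀ ≤ y → (#{i | f i ≤ y} : ℝ) ≤ C * y ^ d) :
    ∑ k ∈ range n with C * y₀ ^ d < (k + 1 : ℕ), (((k + 1 : ℕ) : ℝ) / C) ^ (p / d) ≤
      ∑ i, f i ^ p := by
  rw [sum_filter, ← Fin.sum_univ_eq_sum_range
      (fun k => if C * y₀ ^ d < (k + 1 : ℕ) then (((k + 1 : ℕ) : ℝ) / C) ^ (p / d) else 0),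
    ← Equiv.sum_comp (Tuple.sort f) (fun i => f i ^ p)]
  refine sum_le_sum fun k _ => ?_
  split_ifs with hk
  · push_cast at hk ⊢
    calc (((k : ℝ) + 1) / C) ^ (p / d) ≤ (f (Tuple.sort f k) ^ d) ^ (p / d) := by
          refine Real.rpow_le_rpow (by positivity) ?_ (by positivity)
          exact (div_le_iff₀' hC).2 (le_mul_sort_pow_of_card_filter_le hcount k hk)
      _ = f (Tuple.sort f k) ^ p := by
          rw [← Real.rpow_natCast, ← Real.rpow_mul (hf _),
            mul_div_cancel₀ _ (Nat.cast_ne_zero.2 hd)]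
  · exact Real.rpow_nonneg (hf _) p

theorem sub_le_sum_rpow_of_card_filter_le {p : ℝ} (hp : 0 ≤ p) (hd : d ≠ 0) (hC : 0 < C)
    (hf : ∀ i, 0 ≤ f i) (hcount : ∀ y, y₀ ≤ y → (#{i | f i ≤ y} : ℝ) ≤ C * y ^ d) :
    C⁻¹ ^ (p / d) / (p / d + 1) * (n : ℝ) ^ (p / d + 1) -
        C⁻¹ ^ (p / d) * ⌈C * y₀ ^ d⌉₊ * (n : ℝ) ^ (p / d) ≤ ∑ i, f i ^ p := by
  calc _ = C⁻¹ ^ (p / d) * ((n : ℝ) ^ (p / d + 1) / (p / d + 1) -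
          ⌈C * y₀ ^ d⌉₊ * (n : ℝ) ^ (p / d)) := by ring
    _ ≤ C⁻¹ ^ (p / d) *
          ∑ k ∈ range n with C * y₀ ^ d < (k + 1 : ℕ), ((k + 1 : ℕ) : ℝ) ^ (p / d) := by
          gcongr
          exact sub_le_sum_range_filter_rpow (by positivity) _ n
    _ = ∑ k ∈ range n with C * y₀ ^ d < (k + 1 : ℕ), (((k + 1 : ℕ) : ℝ) / C) ^ (p / d) := by
          rw [mul_sum]
          refine sum_congr rfl fun k _ => ?_
          rw [Real.div_rpow (by positivity) hC.le, Real.inv_rpow hC.le, inv_mul_eq_div]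
    _ ≤ _ := sum_range_filter_div_rpow_le_sum_rpow hp hd hC hf hcount

end CountingBound

theorem exists_isLittleO_add_le_rpow_one_div {S : ℕ → ℝ} {A D γ p : ℝ} (hA : 0 ≤ A)
    (hp : 0 ≤ p) (hS₀ : ∀ n, 0 ≤ S n)
    (hS : ∀ n : ℕ, A * (n : ℝ) ^ (γ + 1) - D * (n : ℝ) ^ γ ≤ S n) :
    ∃ e : ℕ → ℝ, (e =o[atTop] fun n => (n : ℝ) ^ ((γ + 1) / p)) ∧
      ∀ n : ℕ, A ^ (1 / p) * (n : ℝ) ^ ((γ + 1) / p) + e n ≤ S n ^ (1 / p) := by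
  refine ⟨fun n => max (A * (n : ℝ) ^ (γ + 1) - D * (n : ℝ) ^ γ) 0 ^ (1 / p) -
    A ^ (1 / p) * (n : ℝ) ^ ((γ + 1) / p), ?_, fun n => ?_⟩
  · have hlim : Tendsto (fun n : ℕ => max (A - D / n) 0 ^ (1 / p) - A ^ (1 / p)) atTop
        (𝓝 0) := by
      have := (((tendsto_const_nhds (x := A)).sub (tendsto_const_div_atTop_nhds_zero_nat D)).max
        (tendsto_const_nhds (x := (0 : ℝ)))).rpow_const (p := 1 / p) (Or.inr (by positivity))
      simpa [max_eq_left hA] using this.sub_const (A ^ (1 / p))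
    refine (((isLittleO_one_iff ℝ).2 hlim).mul_isBigO
      (isBigO_refl (fun n : ℕ => (n : ℝ) ^ ((γ + 1) / p)) atTop)).congr' ?_ ?_
    · filter_upwards [eventually_gt_atTop 0] with n hn
      have hn' : (0 : ℝ) < n := by exact_mod_cast hn
      have : A * (n : ℝ) ^ (γ + 1) - D * (n : ℝ) ^ γ = (A - D / n) * (n : ℝ) ^ (γ + 1) := by
        rw [Real.rpow_add_one hn'.ne']; field_simp
      rw [this, ← zero_mul ((n : ℝ) ^ (γ + 1)), ← max_mul_of_nonneg _ _ (by positivity), zero_mul,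
        Real.mul_rpow (le_max_right _ _) (by positivity), ← Real.rpow_mul hn'.le, mul_one_div]
      ring
    · simp
  · rw [add_sub_cancel]
    exact Real.rpow_le_rpow (le_max_right _ _) (max_le (hS n) (hS₀ n)) (by positivity)

theorem stmt_6_general (p ε y₀ : ℝ) (hp : 0 < p) (hε : 0 < ε)
    (z : (n : ℕ) → Fin n → ℂ)
    (hcount : ∀ n, ∀ y : ℝ, y₀ ≤ y →
      ((Finset.univ.filter fun i => ‖z n i‖ ≤ y).card : ℝ) ≤
        (2 * Real.pi / Real.sqrt 3) * y ^ 2 + ε * y ^ 2) :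
    ∃ e : ℕ → ℝ,
      (e =o[atTop] fun n : ℕ => (n : ℝ) ^ ((1:ℝ)/2 + 1/p)) ∧
      ∀ n : ℕ, 2 ≤ n →
        (∑ i, ‖z n i‖ ^ p) ^ (1/p) ≥
          (2 / (p + 2)) ^ (1/p) *
            (Real.sqrt 3 / (2 * Real.pi + Real.sqrt 3 * ε)) ^ ((1:ℝ)/2) *
            (n : ℝ) ^ ((1:ℝ)/2 + 1/p) + e n := by
  set C := 2 * Real.pi / Real.sqrt 3 + ε with hC_def
  have hC : 0 < C := by positivity
  have hbound := fun n => sub_le_sum_rpow_of_card_filter_le (f := fun i => ‖z n i‖) hp.le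
    two_ne_zero hC (fun i => norm_nonneg _)
    fun y hy => (hcount n y hy).trans_eq (add_mul _ _ _).symm
  simp only [Nat.cast_ofNat] at hbound
  obtain ⟨e, he, hle⟩ := exists_isLittleO_add_le_rpow_one_div (by positivity) hp.le
    (fun n => sum_nonneg fun i _ => Real.rpow_nonneg (norm_nonneg (z n i)) p) hbound
  have hexp : (p / 2 + 1) / p = 1 / 2 + 1 / p := by field_simp
  have hconst : (C⁻¹ ^ (p / 2) / (p / 2 + 1)) ^ (1 / p) =
      (2 / (p + 2)) ^ (1 / p) *
        (Real.sqrt 3 / (2 * Real.pi + Real.sqrt 3 * ε)) ^ ((1 : ℝ) / 2) := by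
    have hA : C⁻¹ ^ (p / 2) / (p / 2 + 1) = 2 / (p + 2) * C⁻¹ ^ (p / 2) := by field_simp
    have hB : Real.sqrt 3 / (2 * Real.pi + Real.sqrt 3 * ε) = C⁻¹ := by
      rw [hC_def]; field_simp
    rw [hA, Real.mul_rpow (by positivity) (by positivity), ← Real.rpow_mul (inv_pos.2 hC).le,
      hB]
    congr 2
    field_simp
  rw [hexp, hconst] at hle
  rw [hexp] at he
  exact ⟨e, he, fun n _ => hle n⟩

theorem stmt_6 (p ε y₀ : ℝ) (hp : 0 < p) (hε : 0 < ε)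
    (z : (n : ℕ) → Fin n → ℂ)
    (hsep : ∀ n, ∀ i j : Fin n, i ≠ j → 1 ≤ ‖z n i - z n j‖)
    (hcount : ∀ n, ∀ y : ℝ, y₀ ≤ y →
      ((Finset.univ.filter fun i => ‖z n i‖ ≤ y).card : ℝ) ≤
        (2 * Real.pi / Real.sqrt 3) * y ^ 2 + ε * y ^ 2) :
    ∃ e : ℕ → ℝ,
      (e =o[atTop] fun n : ℕ => (n : ℝ) ^ ((1:ℝ)/2 + 1/p)) ∧
      ∀ n : ℕ, 2 ≤ n →
        (∑ i, ‖z n i‖ ^ p) ^ (1/p) ≥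
          (2 / (p + 2)) ^ (1/p) *
            (Real.sqrt 3 / (2 * Real.pi + Real.sqrt 3 * ε)) ^ ((1:ℝ)/2) *
            (n : ℝ) ^ ((1:ℝ)/2 + 1/p) + e n :=
  stmt_6_general p ε y₀ hp hε z hcount
end

section
/- Let L ⊂ ℝ² be a lattice with covolume d > 0. Then the number of lattice points in the closed disk of radius r about the origin satisfies #(L ∩ B_r) = π r²/d + O(r) as r → ∞. In particular #(L ∩ B_r)/r² → π/d. -/
/-!
Translate the half-open fundamental parallelogram `F` of the lattice by the lattice points of
norm at most `r`. These translates are pairwise disjoint, each has area `d`, and every point of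
`F` has norm at most `R = ‖u‖ + ‖v‖`. So they lie in the disk of radius `r + R`, and they cover
the disk of radius `r - R` (a point lies in the translate by its integer part). Hence
`π (r - R)² ≤ d · #(L ∩ B_r) ≤ π (r + R)²`, which is the claim with an error of `O(r)`.
-/

open Filter MeasureTheory Set Metric Submodule
open scoped ENNReal Pointwise

namespace ZSpan

variable {E ι : Type*} [NormedAddCommGroup E] [NormedSpace ℝ E] [Fintype ι]
  (b : Module.Basis ι ℝ E)

theorem norm_le_of_mem_fundamentalDomain {x : E} (hx : x ∈ fundamentalDomain b) :
    ‖x‖ ≤ ∑ i, ‖b i‖ :=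
  fract_eq_self.2 hx ▸ norm_fract_le b x

theorem pairwiseDisjoint_vadd_fundamentalDomain :
    (span ℤ (range b) : Set E).PairwiseDisjoint (· +ᵥ fundamentalDomain b) := by
  rintro z hz z' hz' hne
  refine Set.disjoint_left.2 ?_
  rintro _ ⟨f, hf, rfl⟩ ⟨f', hf', hff'⟩
  have : f' = f := by
    rw [← fract_eq_self.2 hf, ← fract_eq_self.2 hf', ← fract_zSpan_add b f hz,
      ← fract_zSpan_add b f' hz']
    exact congrArg _ hff'
  subst this
  exact hne (add_right_cancel hff').symm

variable [MeasurableSpace E] [BorelSpace E] (μ : Measure E) [μ.IsAddLeftInvariant]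

theorem ncard_mul_measure_fundamentalDomain {s : Set E} (hs : s.Finite)
    (hsΛ : s ⊆ span ℤ (range b)) :
    (s.ncard : ℝ≥0∞) * μ (fundamentalDomain b) = μ (⋃ z ∈ s, z +ᵥ fundamentalDomain b) := by
  obtain ⟨t, rfl⟩ := hs.exists_finset_coe
  rw [Finset.set_biUnion_coe, measure_biUnion_finset]
  · simp [measure_vadd]
  · exact (pairwiseDisjoint_vadd_fundamentalDomain b).subset hsΛ
  · exact fun z _ => (fundamentalDomain_measurableSet b).const_vadd z

theorem ncard_mul_measure_fundamentalDomain_le [ProperSpace E] (r : ℝ) :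
    ((closedBall (0 : E) r ∩ span ℤ (range b)).ncard : ℝ≥0∞) * μ (fundamentalDomain b) ≤
      μ (closedBall (0 : E) (r + ∑ i, ‖b i‖)) := by
  rw [ncard_mul_measure_fundamentalDomain b μ (setFinite_inter b isBounded_closedBall)
    inter_subset_right]
  refine measure_mono (iUnion₂_subset fun z ⟨hz, _⟩ => ?_)
  rintro _ ⟨f, hf, rfl⟩
  rw [mem_closedBall_zero_iff] at hz ⊢
  exact (norm_add_le z f).trans (add_le_add hz (norm_le_of_mem_fundamentalDomain b hf))

theorem measure_closedBall_le_ncard_mul [ProperSpace E] (r : ℝ) :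
    μ (closedBall (0 : E) (r - ∑ i, ‖b i‖)) ≤
      ((closedBall (0 : E) r ∩ span ℤ (range b)).ncard : ℝ≥0∞) * μ (fundamentalDomain b) := by
  rw [ncard_mul_measure_fundamentalDomain b μ (setFinite_inter b isBounded_closedBall)
    inter_subset_right]
  refine measure_mono fun x hx => mem_iUnion₂.2 ⟨floor b x, ⟨?_, (floor b x).2⟩, ?_⟩
  · rw [mem_closedBall_zero_iff] at hx ⊢
    calc ‖(floor b x : E)‖ = ‖x - fract b x‖ := by rw [fract_apply, sub_sub_cancel]
      _ ≤ ‖x‖ + ‖fract b x‖ := norm_sub_le _ _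
      _ ≤ r := by linarith [norm_fract_le b x]
  · exact ⟨fract b x, fract_mem_fundamentalDomain b x, add_sub_cancel _ x⟩

end ZSpan

noncomputable def Module.Basis.ofIsUnitDet {ι R M : Type*} [Fintype ι] [DecidableEq ι]
    [CommRing R] [AddCommGroup M] [Module R M] (e : Module.Basis ι R M) {v : ι → M}
    (h : IsUnit (e.det v)) : Module.Basis ι R M :=
  Module.Basis.mk (e.is_basis_iff_det.2 h).1 (e.is_basis_iff_det.2 h).2.ge

@[simp]
theorem Module.Basis.coe_ofIsUnitDet {ι R M : Type*} [Fintype ι] [DecidableEq ι]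
    [CommRing R] [AddCommGroup M] [Module R M] (e : Module.Basis ι R M) {v : ι → M}
    (h : IsUnit (e.det v)) : ⇑(e.ofIsUnitDet h) = v :=
  Module.Basis.coe_mk _ _

namespace Complex

theorem basisOneI_det_pair (u v : ℂ) : basisOneI.det ![u, v] = u.re * v.im - u.im * v.re := by
  simp [Module.Basis.det_apply, Matrix.det_fin_two, Module.Basis.toMatrix_apply, mul_comm]

theorem mem_span_int_pair {u v z : ℂ} :
    z ∈ span ℤ (range ![u, v]) ↔ ∃ a b : ℤ, z = a * u + b * v := by
  rw [Matrix.range_cons_cons_empty, mem_span_pair]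
  simp [eq_comm]

theorem volume_fundamentalDomain_basisOneI : volume (ZSpan.fundamentalDomain basisOneI) = 1 := by
  have : ZSpan.fundamentalDomain basisOneI =
      measurableEquivRealProd ⁻¹' (Ico (0 : ℝ) 1 ×ˢ Ico (0 : ℝ) 1) := by
    ext z
    simp [ZSpan.mem_fundamentalDomain, Fin.forall_fin_two, measurableEquivRealProd]
  rw [this, volume_preserving_equiv_real_prod.measure_preimage
    (measurableSet_Ico.prod measurableSet_Ico).nullMeasurableSet, Measure.volume_eq_prod,
    Measure.prod_prod]
  simp

variable {u v : ℂ}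

theorem setOf_int_pair_norm_le_eq (r : ℝ) :
    {z : ℂ | (∃ a b : ℤ, z = a * u + b * v) ∧ ‖z‖ ≤ r} =
      closedBall 0 r ∩ span ℤ (range ![u, v]) := by
  ext z
  rw [mem_inter_iff, SetLike.mem_coe, mem_span_int_pair, mem_closedBall_zero_iff]
  exact and_comm

theorem volume_fundamentalDomain_ofIsUnitDet (h : IsUnit (basisOneI.det ![u, v])) :
    volume (ZSpan.fundamentalDomain (basisOneI.ofIsUnitDet h)) =
      ENNReal.ofReal |u.re * v.im - u.im * v.re| := by
  rw [ZSpan.measure_fundamentalDomain _ _ basisOneI, volume_fundamentalDomain_basisOneI, mul_one,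
    Module.Basis.coe_ofIsUnitDet, basisOneI_det_pair]

theorem abs_mul_ncard_int_pair_le (h : IsUnit (basisOneI.det ![u, v])) {r : ℝ} (hr : 0 ≤ r) :
    |u.re * v.im - u.im * v.re| * {z : ℂ | (∃ a b : ℤ, z = a * u + b * v) ∧ ‖z‖ ≤ r}.ncard ≤
      Real.pi * (r + (‖u‖ + ‖v‖)) ^ 2 := by
  have := ZSpan.ncard_mul_measure_fundamentalDomain_le (basisOneI.ofIsUnitDet h) volume r
  rw [volume_fundamentalDomain_ofIsUnitDet, Fin.sum_univ_two, Module.Basis.coe_ofIsUnitDet,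
    ← setOf_int_pair_norm_le_eq] at this
  simpa [ENNReal.toReal_ofReal (by positivity : 0 ≤ r + (‖u‖ + ‖v‖)), mul_comm] using
    ENNReal.toReal_mono measure_closedBall_lt_top.ne this

theorem le_abs_mul_ncard_int_pair (h : IsUnit (basisOneI.det ![u, v])) {r : ℝ}
    (hr : ‖u‖ + ‖v‖ ≤ r) :
    Real.pi * (r - (‖u‖ + ‖v‖)) ^ 2 ≤
      |u.re * v.im - u.im * v.re| * {z : ℂ | (∃ a b : ℤ, z = a * u + b * v) ∧ ‖z‖ ≤ r}.ncard := by
  have := ZSpan.measure_closedBall_le_ncard_mul (basisOneI.ofIsUnitDet h) volume r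
  rw [volume_fundamentalDomain_ofIsUnitDet, Fin.sum_univ_two, Module.Basis.coe_ofIsUnitDet,
    ← setOf_int_pair_norm_le_eq] at this
  simpa [ENNReal.toReal_ofReal (sub_nonneg.2 hr), mul_comm] using
    ENNReal.toReal_mono (by finiteness) this

end Complex

theorem abs_sub_div_le_of_sq_bounds {c d R r N : ℝ} (hc : 0 ≤ c) (hd : 0 < d) (hr : 1 ≤ r)
    (hN : 0 ≤ N) (hup : d * N ≤ c * (r + R) ^ 2)
    (hlow : R ≤ r → c * (r - R) ^ 2 ≤ d * N) :
    |N - c * r ^ 2 / d| ≤ c * (2 * R + R ^ 2) / d * r := by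
  rw [show N - c * r ^ 2 / d = (d * N - c * r ^ 2) / d by field_simp, abs_div, abs_of_pos hd,
    div_mul_eq_mul_div, div_le_div_iff_of_pos_right hd, abs_le]
  have hR2 : c * R ^ 2 ≤ c * R ^ 2 * r := le_mul_of_one_le_right (by positivity) hr
  refine ⟨?_, by nlinarith⟩
  rcases le_or_gt R r with hRr | hrR
  · nlinarith [hlow hRr]
  · nlinarith [mul_le_mul_of_nonneg_left hrR.le (mul_nonneg hc (by linarith : (0 : ℝ) ≤ r)),
      mul_nonneg hd.le hN]

theorem tendsto_div_sq_of_abs_sub_le {f : ℝ → ℝ} {c C : ℝ}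
    (h : ∀ r, 1 ≤ r → |f r - c * r ^ 2| ≤ C * r) :
    Tendsto (fun r => f r / r ^ 2) atTop (nhds c) := by
  rw [← tendsto_sub_nhds_zero_iff]
  refine squeeze_zero_norm' ?_
    (tendsto_const_nhds.div_atTop tendsto_id : Tendsto (C / ·) atTop (nhds 0))
  filter_upwards [eventually_ge_atTop 1] with r hr
  have hr0 : 0 < r := by linarith
  calc ‖f r / r ^ 2 - c‖ = |f r - c * r ^ 2| / r ^ 2 := by
        rw [Real.norm_eq_abs, show f r / r ^ 2 - c = (f r - c * r ^ 2) / r ^ 2 by field_simp,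
          abs_div, abs_of_pos (pow_pos hr0 2)]
    _ ≤ C * r / r ^ 2 := by gcongr; exact h r hr
    _ = C / r := by field_simp

theorem stmt_13 (u v : ℂ) (d : ℝ) (hd : d = |u.re * v.im - u.im * v.re|)
    (hd0 : 0 < d) :
    (∃ C : ℝ, ∀ r : ℝ, 1 ≤ r →
      |(({z : ℂ | (∃ a b : ℤ, z = a * u + b * v) ∧ ‖z‖ ≤ r}.ncard : ℝ)
          - Real.pi * r ^ 2 / d)| ≤ C * r) ∧
    Tendsto (fun r : ℝ =>
        ({z : ℂ | (∃ a b : ℤ, z = a * u + b * v) ∧ ‖z‖ ≤ r}.ncard : ℝ) / r ^ 2)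
      atTop (nhds (Real.pi / d)) := by
  subst hd
  have hdet : IsUnit (Complex.basisOneI.det ![u, v]) := by
    rw [Complex.basisOneI_det_pair, isUnit_iff_ne_zero]
    exact abs_pos.1 hd0
  have hbound := fun r (hr : 1 ≤ r) => abs_sub_div_le_of_sq_bounds Real.pi_pos.le hd0 hr
    (Nat.cast_nonneg _) (Complex.abs_mul_ncard_int_pair_le hdet (by linarith))
    (Complex.le_abs_mul_ncard_int_pair hdet)
  exact ⟨⟨_, hbound⟩, tendsto_div_sq_of_abs_sub_le fun r hr => by
    rw [div_mul_eq_mul_div]; exact hbound r hr⟩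
end
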